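/- Let A be positive semidefinite on H and 𝔸 = diag(A,A) on H⊕H. For X, Y admitting A-adjoints, the 𝔸-Davis-Wielandt radius of the block matrix [[0,X],[Y,0]] satisfies dw_𝔸([[0,X],[Y,0]]) ≤ √(‖X‖_A²/4 + ‖X‖_A⁴) + √(‖Y‖_A²/4 + ‖Y‖_A⁴). -/

import Mathlib

/-!
Factoring `A = S† S` turns `⟨x, y⟩_A` into `⟪S x, S y⟫`, so the `A`-semi-inner product satisfies
Cauchy–Schwarz. If `X` has an `A`-adjoint `X'`, then `T = X' X` is `A`-selfadjoint, and the power
trick `‖Tᵏ u‖_A² ≤ ‖u‖_A ‖T²ᵏ u‖_A`, played against the crude growth `‖Tᵏ u‖_A ≤ ‖S‖ ‖T‖ᵏ ‖u‖`,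
gives `‖T u‖_A ≤ ‖T‖ ‖u‖_A`; hence `X` is `A`-bounded and `‖X u‖_A ≤ ‖X‖_A ‖u‖_A`.

For an `𝔸`-unit vector `z = (z₁, z₂)` put `a = ‖z₁‖_A`, `b = ‖z₂‖_A`, so `a² + b² = 1`. Then
`|⟨[[0,X],[Y,0]] z, z⟩_𝔸| ≤ (‖X‖_A + ‖Y‖_A) a b` and `‖[[0,X],[Y,0]] z‖_𝔸² ≤ ‖X‖_A² b² + ‖Y‖_A² a²`.
Minkowski's inequality in `ℝ²` splits the Davis–Wielandt expression into an `X`-part and a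
`Y`-part, and `a b ≤ 1/2`, `a², b² ≤ 1` bound each of them.
-/

noncomputable section

namespace DW

variable {H : Type*} [NormedAddCommGroup H] [InnerProductSpace ℂ H]

/-- The semi-inner product induced by `A`: `⟨x,y⟩_A = ⟨Ax, y⟩`. -/
def innA (A : H →L[ℂ] H) (x y : H) : ℂ := inner ℂ (A x) y

/-- The seminorm induced by `A`. -/
def normA (A : H →L[ℂ] H) (x : H) : ℝ := Real.sqrt (innA A x x).re

/-- `T` is `A`-bounded. -/
def IsABounded (A T : H →L[ℂ] H) : Prop := ∃ c > 0, ∀ x, normA A (T x) ≤ c * normA A x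

/-- `S` is an `A`-adjoint of `T`. -/
def IsAAdjointPair (A T S : H →L[ℂ] H) : Prop := ∀ x y, innA A (T x) y = innA A x (S y)

/-- The `A`-operator seminorm. -/
def opNormA (A T : H →L[ℂ] H) : ℝ := sSup {r | ∃ x, normA A x = 1 ∧ r = normA A (T x)}

/-- The `A`-minimum modulus. -/
def mA (A T : H →L[ℂ] H) : ℝ := sInf {r | ∃ x, normA A x = 1 ∧ r = normA A (T x)}

/-- The `A`-numerical radius. -/
def wA (A T : H →L[ℂ] H) : ℝ :=
  sSup {r | ∃ x, normA A x = 1 ∧ r = ‖innA A (T x) x‖}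

/-- The `A`-Crawford number. -/
def cA (A T : H →L[ℂ] H) : ℝ :=
  sInf {r | ∃ x, normA A x = 1 ∧ r = ‖innA A (T x) x‖}

/-- The `A`-Davis-Wielandt radius. -/
def dwA (A T : H →L[ℂ] H) : ℝ :=
  sSup {r | ∃ x, normA A x = 1 ∧
    r = Real.sqrt (‖innA A (T x) x‖ ^ 2 + normA A (T x) ^ 4)}

/-- The semi-inner product on `H ⊕ H` induced by `𝔸 = diag(A,A)`. -/
def innA2 (A : H →L[ℂ] H) (z w : H × H) : ℂ := innA A z.1 w.1 + innA A z.2 w.2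

/-- The seminorm on `H ⊕ H` induced by `𝔸 = diag(A,A)`. -/
def normA2 (A : H →L[ℂ] H) (z : H × H) : ℝ := Real.sqrt (innA2 A z z).re

/-- The `𝔸`-numerical radius on `H ⊕ H`, `𝔸 = diag(A,A)`. -/
def wA2 (A : H →L[ℂ] H) (T : H × H →L[ℂ] H × H) : ℝ :=
  sSup {r | ∃ z, normA2 A z = 1 ∧ r = ‖innA2 A (T z) z‖}

/-- The `𝔸`-Davis-Wielandt radius on `H ⊕ H`, `𝔸 = diag(A,A)`. -/
def dwA2 (A : H →L[ℂ] H) (T : H × H →L[ℂ] H × H) : ℝ :=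
  sSup {r | ∃ z, normA2 A z = 1 ∧
    r = Real.sqrt (‖innA2 A (T z) z‖ ^ 2 + normA2 A (T z) ^ 4)}

/-- The block operator `[[0, X], [Y, 0]]` on `H ⊕ H`. -/
def offDiag (X Y : H →L[ℂ] H) : H × H →L[ℂ] H × H :=
  (X.comp (ContinuousLinearMap.snd ℂ H H)).prod (Y.comp (ContinuousLinearMap.fst ℂ H H))

open scoped InnerProductSpace
open Filter Topology

theorem sqrt_add_sq_add_le (p q r w : ℝ) :
    √((p + q) ^ 2 + (r + w) ^ 2) ≤ √(p ^ 2 + r ^ 2) + √(q ^ 2 + w ^ 2) := by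
  have hnorm : ∀ u v : ℝ, √(u ^ 2 + v ^ 2) = ‖(⟨u, v⟩ : ℂ)‖ := fun u v => by
    rw [Complex.norm_def, Complex.normSq_mk]; ring_nf
  rw [hnorm, hnorm, hnorm]
  exact norm_add_le (⟨p, r⟩ : ℂ) ⟨q, w⟩

theorem sq_mul_add_sq_sq_le {N a b : ℝ} (hab : a ^ 2 + b ^ 2 = 1) :
    (N * (a * b)) ^ 2 + (N ^ 2 * b ^ 2) ^ 2 ≤ N ^ 2 / 4 + N ^ 4 := by
  have hab4 : a ^ 2 * b ^ 2 ≤ 1 / 4 := by nlinarith [sq_nonneg (a ^ 2 - b ^ 2)]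
  have hb4 : (b ^ 2) ^ 2 ≤ 1 := by nlinarith [sq_nonneg a, sq_nonneg b]
  nlinarith [mul_le_mul_of_nonneg_left hab4 (sq_nonneg N),
    mul_le_mul_of_nonneg_left hb4 (pow_two_nonneg (N ^ 2))]

theorem sqrt_sq_add_sq_le_of_unit {NX NY a b c s : ℝ} (hab : a ^ 2 + b ^ 2 = 1)
    (hc0 : 0 ≤ c) (hc : c ≤ NX * (a * b) + NY * (a * b))
    (hs0 : 0 ≤ s) (hs : s ≤ NX ^ 2 * b ^ 2 + NY ^ 2 * a ^ 2) :
    √(c ^ 2 + s ^ 2) ≤ √(NX ^ 2 / 4 + NX ^ 4) + √(NY ^ 2 / 4 + NY ^ 4) :=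
  calc √(c ^ 2 + s ^ 2)
      ≤ √((NX * (a * b) + NY * (a * b)) ^ 2 + (NX ^ 2 * b ^ 2 + NY ^ 2 * a ^ 2) ^ 2) := by
        gcongr
    _ ≤ √((NX * (a * b)) ^ 2 + (NX ^ 2 * b ^ 2) ^ 2)
          + √((NY * (b * a)) ^ 2 + (NY ^ 2 * a ^ 2) ^ 2) := by
        rw [mul_comm b a]; exact sqrt_add_sq_add_le _ _ _ _
    _ ≤ √(NX ^ 2 / 4 + NX ^ 4) + √(NY ^ 2 / 4 + NY ^ 4) := by
        gcongr ?_ + ?_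
        · exact Real.sqrt_le_sqrt (sq_mul_add_sq_sq_le hab)
        · exact Real.sqrt_le_sqrt (sq_mul_add_sq_sq_le (by linarith))

theorem le_mul_of_sq_le_mul_two_mul {f : ℕ → ℝ} {C M : ℝ} (hf : ∀ k, 0 ≤ f k) (hM : 0 ≤ M)
    (hsq : ∀ k, f k ^ 2 ≤ f 0 * f (2 * k)) (hgrowth : ∀ k, f k ≤ C * M ^ k) :
    f 1 ≤ M * f 0 := by
  rcases (hf 0).eq_or_lt with h0 | h0
  · have hsq1 := hsq 1
    rw [← h0, zero_mul] at hsq1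
    rw [← h0, mul_zero]
    nlinarith [hf 1]
  by_contra! hlt
  have hpow : ∀ n : ℕ, f 1 ^ 2 ^ n * f 0 ≤ f 0 ^ 2 ^ n * f (2 ^ n) := by
    intro n
    induction n with
    | zero => simp [mul_comm]
    | succ n ih =>
      refine le_of_mul_le_mul_right ?_ h0
      calc f 1 ^ 2 ^ (n + 1) * f 0 * f 0 = (f 1 ^ 2 ^ n * f 0) ^ 2 := by ring
        _ ≤ (f 0 ^ 2 ^ n * f (2 ^ n)) ^ 2 := by gcongr; exact mul_nonneg (pow_nonneg (hf 1) _) h0.le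
        _ = f 0 ^ 2 ^ (n + 1) * f (2 ^ n) ^ 2 := by ring
        _ ≤ f 0 ^ 2 ^ (n + 1) * (f 0 * f (2 * 2 ^ n)) := by gcongr; exact hsq _
        _ = f 0 ^ 2 ^ (n + 1) * f (2 ^ (n + 1)) * f 0 := by rw [pow_succ' 2 n]; ring
  have hf1 : 0 < f 1 := lt_of_le_of_lt (by positivity) hlt
  set ρ := M * f 0 / f 1
  have hbound : ∀ n : ℕ, f 0 ≤ C * ρ ^ 2 ^ n := by
    intro n
    have := (hpow n).trans (mul_le_mul_of_nonneg_left (hgrowth _) (by positivity))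
    rw [div_pow, ← mul_div_assoc, le_div_iff₀ (by positivity), mul_pow]
    linear_combination this
  have hlim : Tendsto (fun n : ℕ => C * ρ ^ 2 ^ n) atTop (𝓝 0) := by
    have hρ : ρ < 1 := (div_lt_one hf1).mpr hlt
    simpa using ((tendsto_pow_atTop_nhds_zero_of_lt_one (by positivity) hρ).comp
      (tendsto_pow_atTop_atTop_of_one_lt one_lt_two)).const_mul C
  exact h0.not_ge (ge_of_tendsto' hlim hbound)

theorem norm_pow_apply_le {𝕜 E : Type*} [NontriviallyNormedField 𝕜] [NormedAddCommGroup E]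
    [NormedSpace 𝕜 E] (T : E →L[𝕜] E) (u : E) : ∀ k : ℕ, ‖(T ^ k) u‖ ≤ ‖T‖ ^ k * ‖u‖
  | 0 => by simp
  | k + 1 => by
    rw [show (T ^ (k + 1)) u = T ((T ^ k) u) by rw [pow_succ']; rfl, pow_succ', mul_assoc]
    exact (T.le_opNorm _).trans
      (mul_le_mul_of_nonneg_left (norm_pow_apply_le T u k) (norm_nonneg T))

section Seminorm

variable {A : H →L[ℂ] H}

theorem exists_innA_eq_inner [CompleteSpace H] (hA : A.IsPositive) :
    ∃ S : H →L[ℂ] H, ∀ x y, innA A x y = ⟪S x, S y⟫_ℂ := by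
  obtain ⟨S, rfl⟩ := CStarAlgebra.nonneg_iff_eq_star_mul_self.mp
    ((ContinuousLinearMap.nonneg_iff_isPositive A).mpr hA)
  exact ⟨S, fun x y => ContinuousLinearMap.adjoint_inner_left S y (S x)⟩

theorem normA_eq_norm {S : H →L[ℂ] H} (hS : ∀ x y, innA A x y = ⟪S x, S y⟫_ℂ) (x : H) :
    normA A x = ‖S x‖ := by
  rw [normA, hS, inner_self_eq_norm_sq_to_K]
  norm_cast
  exact Real.sqrt_sq (norm_nonneg _)

theorem normA_nonneg (x : H) : 0 ≤ normA A x := Real.sqrt_nonneg _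

theorem normA_sq (hA : A.IsPositive) (x : H) : normA A x ^ 2 = (innA A x x).re :=
  Real.sq_sqrt (hA.re_inner_nonneg_left x)

theorem norm_innA_le [CompleteSpace H] (hA : A.IsPositive) (x y : H) :
    ‖innA A x y‖ ≤ normA A x * normA A y := by
  obtain ⟨S, hS⟩ := exists_innA_eq_inner hA
  rw [hS, normA_eq_norm hS, normA_eq_norm hS]
  exact norm_inner_le_norm _ _

theorem normA_smul (c : ℂ) (x : H) : normA A (c • x) = ‖c‖ * normA A x := by
  rw [normA, innA, map_smul, inner_smul_left, inner_smul_right, ← mul_assoc,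
    Complex.conj_mul', ← Complex.ofReal_pow, Complex.re_ofReal_mul,
    Real.sqrt_mul (by positivity), Real.sqrt_sq (norm_nonneg c), normA, innA]

theorem normA2_sq (hA : A.IsPositive) (z : H × H) :
    normA2 A z ^ 2 = normA A z.1 ^ 2 + normA A z.2 ^ 2 := by
  rw [normA_sq hA, normA_sq hA, ← Complex.add_re]
  exact Real.sq_sqrt (by rw [innA2, Complex.add_re, ← normA_sq hA, ← normA_sq hA]; positivity)

theorem normA_apply_le_opNormA {X : H →L[ℂ] H} (hX : IsABounded A X) (u : H) :
    normA A (X u) ≤ opNormA A X * normA A u := by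
  obtain ⟨c, -, hc⟩ := hX
  rcases (normA_nonneg (A := A) u).eq_or_lt with h0 | h0
  · rw [← h0, mul_zero]
    simpa [← h0] using hc u
  have hbdd : BddAbove {r | ∃ x, normA A x = 1 ∧ r = normA A (X x)} :=
    ⟨c, by rintro r ⟨x, hx, rfl⟩; simpa [hx] using hc x⟩
  have hunit : normA A ((normA A u : ℂ)⁻¹ • u) = 1 := by
    rw [normA_smul, norm_inv, Complex.norm_real, Real.norm_of_nonneg h0.le, inv_mul_cancel₀ h0.ne']
  have hle := le_csSup hbdd ⟨_, hunit, rfl⟩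
  rw [map_smul, normA_smul, norm_inv, Complex.norm_real, Real.norm_of_nonneg h0.le,
    inv_mul_le_iff₀ h0] at hle
  exact hle.trans_eq (mul_comm _ _)

end Seminorm

section AAdjoint

variable {A X X' Y Y' T : H →L[ℂ] H}

theorem IsAAdjointPair.mul (hX : IsAAdjointPair A X X') (hY : IsAAdjointPair A Y Y') :
    IsAAdjointPair A (X * Y) (Y' * X') := fun x y => by
  simp only [ContinuousLinearMap.mul_def, ContinuousLinearMap.comp_apply, hX _ y, hY x _]

theorem IsAAdjointPair.pow (hT : IsAAdjointPair A T T) :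
    ∀ n : ℕ, IsAAdjointPair A (T ^ n) (T ^ n)
  | 0 => fun _ _ => rfl
  | n + 1 => by
    have := (hT.pow n).mul hT
    rwa [← pow_succ, ← pow_succ'] at this

theorem IsAAdjointPair.symm [CompleteSpace H] (hA : A.IsPositive) (h : IsAAdjointPair A X X') :
    IsAAdjointPair A X' X := fun x y => by
  obtain ⟨S, hS⟩ := exists_innA_eq_inner hA
  rw [hS, hS, ← inner_conj_symm, ← hS, ← h, hS, inner_conj_symm]

theorem normA_apply_le_of_isAAdjointPair_self [CompleteSpace H] (hA : A.IsPositive)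
    (hT : IsAAdjointPair A T T) (u : H) : normA A (T u) ≤ ‖T‖ * normA A u := by
  obtain ⟨S, hS⟩ := exists_innA_eq_inner hA
  refine le_mul_of_sq_le_mul_two_mul (f := fun k => normA A ((T ^ k) u)) (C := ‖S‖ * ‖u‖)
    (fun _ => normA_nonneg _) (norm_nonneg T) (fun k => ?_) (fun k => ?_)
  · calc normA A ((T ^ k) u) ^ 2 = (innA A u ((T ^ k) ((T ^ k) u))).re := by
          rw [normA_sq hA, hT.pow k]
      _ ≤ normA A u * normA A ((T ^ (2 * k)) u) := by
          rw [two_mul, pow_add, ContinuousLinearMap.mul_def, ContinuousLinearMap.comp_apply]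
          exact (Complex.re_le_norm _).trans (norm_innA_le hA _ _)
      _ = _ := by simp
  · calc normA A ((T ^ k) u) ≤ ‖S‖ * ‖(T ^ k) u‖ := by
          rw [normA_eq_norm hS]; exact S.le_opNorm _
      _ ≤ ‖S‖ * (‖T‖ ^ k * ‖u‖) := by gcongr; exact norm_pow_apply_le T u k
      _ = ‖S‖ * ‖u‖ * ‖T‖ ^ k := by ring

theorem IsAAdjointPair.normA_apply_le [CompleteSpace H] (hA : A.IsPositive)
    (h : IsAAdjointPair A X X') (u : H) :
    normA A (X u) ≤ √‖X' * X‖ * normA A u := by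
  have hsq : normA A (X u) ^ 2 ≤ ‖X' * X‖ * normA A u ^ 2 :=
    calc normA A (X u) ^ 2 = (innA A u ((X' * X) u)).re := by rw [normA_sq hA, h]; rfl
      _ ≤ normA A u * normA A ((X' * X) u) := (Complex.re_le_norm _).trans (norm_innA_le hA _ _)
      _ ≤ normA A u * (‖X' * X‖ * normA A u) := by
          gcongr
          · exact normA_nonneg u
          · exact normA_apply_le_of_isAAdjointPair_self hA ((h.symm hA).mul h) u
      _ = ‖X' * X‖ * normA A u ^ 2 := by ring
  rw [← Real.sqrt_sq (normA_nonneg u), ← Real.sqrt_mul (norm_nonneg _)]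
  exact Real.le_sqrt_of_sq_le hsq

theorem IsAAdjointPair.isABounded [CompleteSpace H] (hA : A.IsPositive)
    (h : IsAAdjointPair A X X') : IsABounded A X :=
  ⟨√‖X' * X‖ + 1, by positivity, fun u =>
    (h.normA_apply_le hA u).trans
      (mul_le_mul_of_nonneg_right (le_add_of_nonneg_right zero_le_one) (normA_nonneg u))⟩

theorem sqrt_dwA2_offDiag_le [CompleteSpace H] (hA : A.IsPositive) {NX NY : ℝ}
    (hX : ∀ u, normA A (X u) ≤ NX * normA A u) (hY : ∀ u, normA A (Y u) ≤ NY * normA A u)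
    {z : H × H} (hz : normA2 A z = 1) :
    √(‖innA2 A (offDiag X Y z) z‖ ^ 2 + normA2 A (offDiag X Y z) ^ 4)
      ≤ √(NX ^ 2 / 4 + NX ^ 4) + √(NY ^ 2 / 4 + NY ^ 4) := by
  set a := normA A z.1
  set b := normA A z.2
  have hab : a ^ 2 + b ^ 2 = 1 := by rw [← normA2_sq hA, hz, one_pow]
  have hinner : ‖innA2 A (offDiag X Y z) z‖ ≤ NX * (a * b) + NY * (a * b) :=
    calc ‖innA2 A (offDiag X Y z) z‖ = ‖innA A (X z.2) z.1 + innA A (Y z.1) z.2‖ := rfl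
      _ ≤ normA A (X z.2) * a + normA A (Y z.1) * b :=
          (norm_add_le _ _).trans (add_le_add (norm_innA_le hA _ _) (norm_innA_le hA _ _))
      _ ≤ NX * b * a + NY * a * b := by
          gcongr
          · exact normA_nonneg _
          · exact hX _
          · exact normA_nonneg _
          · exact hY _
      _ = NX * (a * b) + NY * (a * b) := by ring
  have hnorm : normA2 A (offDiag X Y z) ^ 2 ≤ NX ^ 2 * b ^ 2 + NY ^ 2 * a ^ 2 := by
    rw [normA2_sq hA, ← mul_pow, ← mul_pow]
    exact add_le_add (pow_le_pow_left₀ (normA_nonneg _) (hX _) 2)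
      (pow_le_pow_left₀ (normA_nonneg _) (hY _) 2)
  rw [show normA2 A (offDiag X Y z) ^ 4 = (normA2 A (offDiag X Y z) ^ 2) ^ 2 by ring]
  exact sqrt_sq_add_sq_le_of_unit hab (norm_nonneg _) hinner (by positivity) hnorm

end AAdjoint

end DW

open DW

variable {H : Type*} [NormedAddCommGroup H] [InnerProductSpace ℂ H] [CompleteSpace H]

theorem stmt14 (A X Y : H →L[ℂ] H) (hA : A.IsPositive)
    (hX : ∃ X', IsAAdjointPair A X X') (hY : ∃ Y', IsAAdjointPair A Y Y') :
    dwA2 A (offDiag X Y) ≤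
      Real.sqrt (opNormA A X ^ 2 / 4 + opNormA A X ^ 4) +
        Real.sqrt (opNormA A Y ^ 2 / 4 + opNormA A Y ^ 4) := by
  obtain ⟨X', hX'⟩ := hX
  obtain ⟨Y', hY'⟩ := hY
  refine Real.sSup_le ?_ (by positivity)
  rintro r ⟨z, hz, rfl⟩
  exact sqrt_dwA2_offDiag_le hA (normA_apply_le_opNormA (hX'.isABounded hA))
    (normA_apply_le_opNormA (hY'.isABounded hA)) hz
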